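/- Let H be a complex Hilbert space, A a bounded self-adjoint operator on H, and λ₀ ≤ 0 a real number with Re⟨Au,u⟩ ≥ λ₀‖u‖² for all u ∈ H. Let J and J' be bounded self-adjoint operators on H with 0 ≤ Re⟨Ju,u⟩ ≤ ‖u‖² for all u, and J∘J + J'∘J' = 1. Let γ ≥ 0 satisfy ‖[J,[J,A]]‖ ≤ γ and ‖[J',[J',A]]‖ ≤ γ, and let α > 0 satisfy Re⟨A(J'u),J'u⟩ ≥ α‖J'u‖² for all u ∈ H. Let E be an orthogonal projection on H such that Re⟨A(Eu),Eu⟩ ≤ λ‖Eu‖² for all u ∈ H, where λ is a real number. If α > λ + γ, then for every u ∈ H one has ‖J'(Eu)‖² ≤ ((λ+γ−λ₀)/(α−λ₀))·‖Eu‖². -/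

import Mathlib

/-!
IMS localization: from `J² + J'² = 1` one gets `[J,[J,A]] + [J',[J',A]] = 2(A - JAJ - J'AJ')`, hence
`Re⟨Av,v⟩ ≥ Re⟨AJv,Jv⟩ + Re⟨AJ'v,J'v⟩ - γ‖v‖² ≥ λ₀‖Jv‖² + α‖J'v‖² - γ‖v‖²`.
For `v = Eu` the left side is at most `λ‖v‖²`, and `‖Jv‖² = ‖v‖² - ‖J'v‖²` turns this into
`(α - λ₀)‖J'v‖² ≤ (λ + γ - λ₀)‖v‖²`.
-/

open RCLike
open scoped InnerProductSpace

theorem lie_lie_add_lie_lie_of_mul_self_add_mul_self_eq_one {R : Type*} [Ring R] {J J' : R}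
    (h : J * J + J' * J' = 1) (A : R) :
    ⁅J, ⁅J, A⁆⁆ + ⁅J', ⁅J', A⁆⁆ = 2 * (A - (J * A * J + J' * A * J')) := by
  have expand : ⁅J, ⁅J, A⁆⁆ + ⁅J', ⁅J', A⁆⁆ =
      (J * J + J' * J') * A + A * (J * J + J' * J') - 2 * (J * A * J + J' * A * J') := by
    simp only [Ring.lie_def]
    noncomm_ring
  rw [expand, h]
  noncomm_ring

section

variable {𝕜 H : Type*} [RCLike 𝕜] [NormedAddCommGroup H] [InnerProductSpace 𝕜 H]

theorem abs_re_inner_apply_self_le (T : H →L[𝕜] H) (v : H) :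
    |re ⟪T v, v⟫_𝕜| ≤ ‖T‖ * ‖v‖ ^ 2 :=
  calc |re ⟪T v, v⟫_𝕜| ≤ ‖T v‖ * ‖v‖ := (abs_re_le_norm _).trans (norm_inner_le_norm _ _)
    _ ≤ ‖T‖ * ‖v‖ * ‖v‖ := by gcongr; exact T.le_opNorm v
    _ = ‖T‖ * ‖v‖ ^ 2 := by ring

variable {J J' : H →L[𝕜] H}

theorem norm_sq_add_norm_sq_of_mul_self_add_mul_self_eq_one
    (hJ : (J : H →ₗ[𝕜] H).IsSymmetric) (hJ' : (J' : H →ₗ[𝕜] H).IsSymmetric)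
    (h : J * J + J' * J' = 1) (v : H) : ‖J v‖ ^ 2 + ‖J' v‖ ^ 2 = ‖v‖ ^ 2 := by
  have := congrArg (fun T : H →L[𝕜] H => re ⟪T v, v⟫_𝕜) h
  simp only [add_apply, mul_apply_eq_comp, one_apply_eq_self, inner_add_left, map_add] at this
  rwa [hJ.apply_clm, hJ'.apply_clm, inner_self_eq_norm_sq, inner_self_eq_norm_sq,
    inner_self_eq_norm_sq] at this

theorem re_inner_apply_self_eq_localized (hJ : (J : H →ₗ[𝕜] H).IsSymmetric)
    (hJ' : (J' : H →ₗ[𝕜] H).IsSymmetric) (h : J * J + J' * J' = 1) (A : H →L[𝕜] H) (v : H) :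
    re ⟪A v, v⟫_𝕜 = re ⟪A (J v), J v⟫_𝕜 + re ⟪A (J' v), J' v⟫_𝕜 +
      re ⟪(⁅J, ⁅J, A⁆⁆ + ⁅J', ⁅J', A⁆⁆) v, v⟫_𝕜 / 2 := by
  rw [lie_lie_add_lie_lie_of_mul_self_add_mul_self_eq_one h, two_mul]
  simp only [mul_apply_eq_comp, sub_apply, add_apply, inner_sub_left, inner_add_left, map_add,
    map_sub]
  rw [hJ.apply_clm, hJ'.apply_clm]
  ring

theorem mul_norm_sq_apply_le_of_localization {A : H →L[𝕜] H} {lam₀ α γ lam : ℝ}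
    (hJ : (J : H →ₗ[𝕜] H).IsSymmetric) (hJ' : (J' : H →ₗ[𝕜] H).IsSymmetric)
    (h : J * J + J' * J' = 1) (hAlow : ∀ u, lam₀ * ‖u‖ ^ 2 ≤ re ⟪A u, u⟫_𝕜)
    (hAJ' : ∀ u, α * ‖J' u‖ ^ 2 ≤ re ⟪A (J' u), J' u⟫_𝕜)
    (hcommJ : ‖⁅J, ⁅J, A⁆⁆‖ ≤ γ) (hcommJ' : ‖⁅J', ⁅J', A⁆⁆‖ ≤ γ)
    {v : H} (hv : re ⟪A v, v⟫_𝕜 ≤ lam * ‖v‖ ^ 2) :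
    (α - lam₀) * ‖J' v‖ ^ 2 ≤ (lam + γ - lam₀) * ‖v‖ ^ 2 := by
  have hloc := re_inner_apply_self_eq_localized hJ hJ' h A v
  have hpart := norm_sq_add_norm_sq_of_mul_self_add_mul_self_eq_one hJ hJ' h v
  have hcomm : -((γ + γ) * ‖v‖ ^ 2) ≤ re ⟪(⁅J, ⁅J, A⁆⁆ + ⁅J', ⁅J', A⁆⁆) v, v⟫_𝕜 :=
    neg_le_of_abs_le <| (abs_re_inner_apply_self_le _ v).trans <|
      mul_le_mul_of_nonneg_right (norm_add_le_of_le hcommJ hcommJ') (sq_nonneg _)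
  linear_combination hv + hAlow (J v) + hAJ' v + hcomm / 2 - hloc - lam₀ * hpart

end

theorem localization_upper_bound_Jprime_general {H : Type*} [NormedAddCommGroup H]
    [InnerProductSpace ℂ H] [CompleteSpace H]
    (A J J' E : H →L[ℂ] H)
    (lam₀ : ℝ) (hlam₀ : lam₀ ≤ 0)
    (hAlow : ∀ u : H, lam₀ * ‖u‖ ^ 2 ≤ (inner ℂ (A u) u : ℂ).re)
    (hJ : IsSelfAdjoint J) (hJ' : IsSelfAdjoint J')
    (hJJ' : J * J + J' * J' = 1)
    (γ : ℝ)
    (hcommJ : ‖⁅J, ⁅J, A⁆⁆‖ ≤ γ) (hcommJ' : ‖⁅J', ⁅J', A⁆⁆‖ ≤ γ)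
    (α : ℝ) (hα : 0 < α)
    (hAJ' : ∀ u : H, α * ‖J' u‖ ^ 2 ≤ (inner ℂ (A (J' u)) (J' u) : ℂ).re)
    (lam : ℝ)
    (hAE : ∀ u : H, (inner ℂ (A (E u)) (E u) : ℂ).re ≤ lam * ‖E u‖ ^ 2) :
    ∀ u : H, ‖J' (E u)‖ ^ 2 ≤ ((lam + γ - lam₀) / (α - lam₀)) * ‖E u‖ ^ 2 := by
  intro u
  have hgap : 0 < α - lam₀ := by linarith
  rw [div_mul_eq_mul_div, le_div_iff₀ hgap, mul_comm]
  exact mul_norm_sq_apply_le_of_localization hJ.isSymmetric hJ'.isSymmetric hJJ' hAlow hAJ'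
    hcommJ hcommJ' (hAE u)

/-- **Localization estimate for spectral projections** (Proposition on localization).
If `A` is self-adjoint with `Re⟨Au,u⟩ ≥ λ₀‖u‖²`, `J, J'` are self-adjoint with
`0 ≤ Re⟨Ju,u⟩ ≤ ‖u‖²` and `J² + J'² = 1`, the double commutators `[J,[J,A]]` and
`[J',[J',A]]` have norm at most `γ`, `Re⟨A J'u, J'u⟩ ≥ α‖J'u‖²`, and `E` is an orthogonal
projection with `Re⟨A Eu, Eu⟩ ≤ λ‖Eu‖²`, then `α > λ + γ` implies
`‖J′(Eu)‖² ≤ ((λ+γ−λ₀)/(α−λ₀))‖Eu‖²` for all `u`. -/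
theorem localization_upper_bound_Jprime {H : Type*} [NormedAddCommGroup H]
    [InnerProductSpace ℂ H] [CompleteSpace H]
    (A J J' E : H →L[ℂ] H)
    (hA : IsSelfAdjoint A)
    (lam₀ : ℝ) (hlam₀ : lam₀ ≤ 0)
    (hAlow : ∀ u : H, lam₀ * ‖u‖ ^ 2 ≤ (inner ℂ (A u) u : ℂ).re)
    (hJ : IsSelfAdjoint J) (hJ' : IsSelfAdjoint J')
    (hJ0 : ∀ u : H, 0 ≤ (inner ℂ (J u) u : ℂ).re)
    (hJ1 : ∀ u : H, (inner ℂ (J u) u : ℂ).re ≤ ‖u‖ ^ 2)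
    (hJJ' : J * J + J' * J' = 1)
    (γ : ℝ) (hγ : 0 ≤ γ)
    (hcommJ : ‖⁅J, ⁅J, A⁆⁆‖ ≤ γ) (hcommJ' : ‖⁅J', ⁅J', A⁆⁆‖ ≤ γ)
    (α : ℝ) (hα : 0 < α)
    (hAJ' : ∀ u : H, α * ‖J' u‖ ^ 2 ≤ (inner ℂ (A (J' u)) (J' u) : ℂ).re)
    (hEproj : E * E = E) (hEsa : IsSelfAdjoint E)
    (lam : ℝ)
    (hAE : ∀ u : H, (inner ℂ (A (E u)) (E u) : ℂ).re ≤ lam * ‖E u‖ ^ 2)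
    (hgap : α > lam + γ) :
    ∀ u : H, ‖J' (E u)‖ ^ 2 ≤ ((lam + γ - lam₀) / (α - lam₀)) * ‖E u‖ ^ 2 :=
  localization_upper_bound_Jprime_general A J J' E lam₀ hlam₀ hAlow hJ hJ' hJJ' γ hcommJ hcommJ' α
    hα hAJ' lam hAE
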